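/- Let 0 ≤ α < n and B a ball centered at the origin in ℝ^n. Then Mχ_B(x) ∼ χ_B(x) + ∑_{k≥1} 2^{−kn} χ_{2^k B \ 2^{k−1}B}(x) pointwise, with constants depending only on n; consequently, for any Banach lattice X in which ‖χ_{2^k B}‖_{X'} ≲ (2^k r_B)^s for some s < n − α, one has ‖(Mχ_B)^{1−α/n}‖_{X'} ≲ r_B^s. -/

import Mathlib

open MeasureTheory Metric Set ENNReal

noncomputable section

abbrev Euc (n : ℕ) := EuclideanSpace ℝ (Fin n)

/-- A Banach lattice of measurable functions on `ℝⁿ`, modeled through its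
(extended-real valued) norm functional. -/
structure BFL (n : ℕ) where
  N : (Euc n → ℝ) → ℝ≥0∞
  mono : ∀ f g : Euc n → ℝ, (∀ x, |g x| ≤ |f x|) → N g ≤ N f
  add_le : ∀ f g : Euc n → ℝ, N (f + g) ≤ N f + N g
  smul : ∀ (a : ℝ) (f : Euc n → ℝ), N (fun x => a * f x) = ENNReal.ofReal |a| * N f

/-- The Köthe dual norm of a Banach function lattice, evaluated on a
nonnegative (extended-real valued) function. -/
def kdual {n : ℕ} (X : BFL n) (g : Euc n → ℝ≥0∞) : ℝ≥0∞ :=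
  ⨆ (f : Euc n → ℝ) (_ : Measurable f ∧ X.N f ≤ 1), ∫⁻ x, ENNReal.ofReal |f x| * g x

/-- The Hardy–Littlewood maximal operator (uncentered, over balls). -/
def hlMax (n : ℕ) (g : Euc n → ℝ≥0∞) (y : Euc n) : ℝ≥0∞ :=
  ⨆ (c : Euc n) (r : ℝ) (_ : 0 < r ∧ y ∈ ball c r),
    (volume (ball c r))⁻¹ * ∫⁻ x in ball c r, g x

/-- The characteristic function of a ball, as an `ℝ≥0∞` valued function. -/
def chiE (n : ℕ) (c : Euc n) (r : ℝ) : Euc n → ℝ≥0∞ := (ball c r).indicator fun _ => (1 : ℝ≥0∞)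

/-- `χ_B + ∑_{k ≥ 1} 2^{-kn} χ_{2^k B \ 2^{k-1} B}` for `B = B(0,r)`. -/
def dyadicSum (n : ℕ) (r : ℝ) (x : Euc n) : ℝ≥0∞ :=
  chiE n 0 r x + ∑' k : ℕ,
    (2 : ℝ≥0∞) ^ (-(((k : ℝ) + 1) * n)) *
      ((ball (0 : Euc n) ((2 : ℝ) ^ (k + 1) * r) \
        ball (0 : Euc n) ((2 : ℝ) ^ k * r)).indicator (fun _ => (1 : ℝ≥0∞)) x)

/-!
On the ball `B = B(0, r)` the maximal function of `χ_B` is `1`. At a point `x` of the dyadic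
annulus `2^{k+1} B \ 2^k B`, the ball `B(0, 2^{k+1} r)` contains `x` and gives the average
`2^{-(k+1) n}`. Conversely, a ball containing `x` and meeting `B` has radius `ρ > (‖x‖ - r) / 2`,
so `ρ ≥ ‖x‖ / 4` once `‖x‖ ≥ 2 r`, and its average is at most `(4 r / ‖x‖)^n ≤ 8^n 2^{-(k+1) n}`.
So `Mχ_B` and the dyadic sum agree up to the factor `8^n`.

Raising to the power `θ = 1 - α / n` and dominating the annulus by the ball `2^{k+1} B`,
`(Mχ_B)^θ ≤ 8^{nθ} ∑_k 2^{-k n θ} χ_{2^k B}`. The Köthe dual norm is countably subadditive on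
measurable functions, so the hypothesis on `‖χ_{2^k B}‖_{X'}` bounds `‖(Mχ_B)^θ‖_{X'}` by
`r^s ∑_k 2^{k (s - n θ)}`, a convergent geometric series because `s < n - α = n θ`.
-/

section VolumeRatio

variable {E : Type*} [NormedAddCommGroup E] [NormedSpace ℝ E] [FiniteDimensional ℝ E]
  [MeasurableSpace E] [BorelSpace E] (μ : Measure E) [μ.IsAddHaarMeasure]

theorem inv_measure_ball_mul_measure_ball (c c' : E) {ρ r : ℝ} (hρ : 0 < ρ) (hr : 0 < r) :
    (μ (ball c ρ))⁻¹ * μ (ball c' r) = ENNReal.ofReal ((r / ρ) ^ Module.finrank ℝ E) := by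
  rw [Measure.addHaar_ball_of_pos μ _ hρ, Measure.addHaar_ball_of_pos μ _ hr]
  set U := μ (ball (0 : E) 1)
  have hU0 : U ≠ 0 := (measure_ball_pos μ 0 one_pos).ne'
  have hUt : U ≠ ⊤ := measure_ball_lt_top.ne
  have hρ0 : ENNReal.ofReal (ρ ^ Module.finrank ℝ E) ≠ 0 := by positivity
  rw [ENNReal.mul_inv (Or.inl hρ0) (Or.inl ofReal_ne_top), mul_mul_mul_comm,
    ENNReal.inv_mul_cancel hU0 hUt, mul_one, div_pow, ENNReal.ofReal_div_of_pos (by positivity),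
    div_eq_mul_inv, mul_comm]

end VolumeRatio

section MaximalFunction

variable {n : ℕ}

theorem le_hlMax (g : Euc n → ℝ≥0∞) {x c : Euc n} {ρ : ℝ} (hρ : 0 < ρ) (hx : x ∈ ball c ρ) :
    (volume (ball c ρ))⁻¹ * ∫⁻ y in ball c ρ, g y ≤ hlMax n g x :=
  le_iSup_of_le c (le_iSup_of_le ρ (le_iSup_of_le ⟨hρ, hx⟩ le_rfl))

theorem hlMax_le {g : Euc n → ℝ≥0∞} {x : Euc n} {A : ℝ≥0∞}
    (h : ∀ c ρ, 0 < ρ → x ∈ ball c ρ → (volume (ball c ρ))⁻¹ * ∫⁻ y in ball c ρ, g y ≤ A) :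
    hlMax n g x ≤ A :=
  iSup_le fun c => iSup_le fun ρ => iSup_le fun hc => h c ρ hc.1 hc.2

theorem measurable_chiE (c : Euc n) (r : ℝ) : Measurable (chiE n c r) :=
  measurable_const.indicator measurableSet_ball

theorem setLIntegral_chiE (t : Set (Euc n)) (c : Euc n) (r : ℝ) :
    ∫⁻ x in t, chiE n c r x = volume (t ∩ ball c r) := by
  rw [chiE, lintegral_indicator measurableSet_ball, Measure.restrict_restrict measurableSet_ball]
  simp [Set.inter_comm]

theorem average_chiE_le_one (c c' : Euc n) {ρ : ℝ} (hρ : 0 < ρ) (r : ℝ) :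
    (volume (ball c ρ))⁻¹ * ∫⁻ y in ball c ρ, chiE n c' r y ≤ 1 := by
  rw [setLIntegral_chiE]
  calc (volume (ball c ρ))⁻¹ * volume (ball c ρ ∩ ball c' r)
      ≤ (volume (ball c ρ))⁻¹ * volume (ball c ρ) := by gcongr; exact inter_subset_left
    _ = 1 := ENNReal.inv_mul_cancel (measure_ball_pos _ c hρ).ne' measure_ball_lt_top.ne

theorem average_chiE_le_ofReal (c c' : Euc n) {ρ r : ℝ} (hρ : 0 < ρ) (hr : 0 < r) :
    (volume (ball c ρ))⁻¹ * ∫⁻ y in ball c ρ, chiE n c' r y ≤ ENNReal.ofReal ((r / ρ) ^ n) := by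
  rw [setLIntegral_chiE]
  calc (volume (ball c ρ))⁻¹ * volume (ball c ρ ∩ ball c' r)
      ≤ (volume (ball c ρ))⁻¹ * volume (ball c' r) := by gcongr; exact inter_subset_right
    _ = _ := by simpa using inv_measure_ball_mul_measure_ball volume c c' hρ hr

theorem hlMax_chiE_le_one (c : Euc n) (r : ℝ) (x : Euc n) : hlMax n (chiE n c r) x ≤ 1 :=
  hlMax_le fun c' _ hρ _ => average_chiE_le_one c' c hρ r

theorem ofReal_le_hlMax_chiE {r ρ : ℝ} (hr : 0 < r) (hrρ : r ≤ ρ) {x : Euc n} (hx : ‖x‖ < ρ) :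
    ENNReal.ofReal ((r / ρ) ^ n) ≤ hlMax n (chiE n 0 r) x := by
  have hρ : 0 < ρ := hr.trans_le hrρ
  have h := le_hlMax (chiE n 0 r) hρ (mem_ball_zero_iff.mpr hx)
  rwa [setLIntegral_chiE, inter_eq_self_of_subset_right (ball_subset_ball hrρ),
    inv_measure_ball_mul_measure_ball volume 0 0 hρ hr, finrank_euclideanSpace_fin] at h

theorem one_le_hlMax_chiE {r : ℝ} {x : Euc n} (hx : x ∈ ball 0 r) :
    1 ≤ hlMax n (chiE n 0 r) x := by
  have hr : 0 < r := pos_of_mem_ball hx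
  simpa [hr.ne'] using ofReal_le_hlMax_chiE hr le_rfl (mem_ball_zero_iff.mp hx)

theorem hlMax_chiE_le_ofReal (r : ℝ) {x : Euc n} (hx : x ≠ 0) :
    hlMax n (chiE n 0 r) x ≤ ENNReal.ofReal ((4 * r / ‖x‖) ^ n) := by
  refine hlMax_le fun c ρ hρ hxc => ?_
  rcases (ball c ρ ∩ ball 0 r).eq_empty_or_nonempty with h | ⟨z, hzc, hz⟩
  · simp [setLIntegral_chiE, h]
  have hx0 : 0 < ‖x‖ := norm_pos_iff.mpr hx
  have hr : 0 < r := pos_of_mem_ball hz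
  have hxρ : ‖x‖ < 2 * ρ + r := by
    have := dist_triangle4 x c z 0
    rw [dist_comm c z] at this
    simp only [dist_zero_right] at this
    linarith [mem_ball.mp hxc, mem_ball.mp hzc, mem_ball_zero_iff.mp hz]
  rcases le_or_gt ‖x‖ (2 * r) with hx2 | hx2
  · refine (average_chiE_le_one c 0 hρ r).trans ?_
    rw [← ENNReal.ofReal_one, ← one_pow n]
    gcongr
    rw [le_div_iff₀ hx0]
    linarith
  · refine (average_chiE_le_ofReal c 0 hρ hr).trans
      (ENNReal.ofReal_le_ofReal (pow_le_pow_left₀ (by positivity) ?_ n))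
    rw [div_le_div_iff₀ hρ hx0]
    nlinarith

end MaximalFunction

section Dyadic

variable {n : ℕ} {r : ℝ}

theorem mem_ball_or_exists_mem_annulus (hr : 0 < r) (x : Euc n) :
    x ∈ ball 0 r ∨ ∃ k : ℕ, x ∈ ball (0 : Euc n) (2 ^ (k + 1) * r) \ ball 0 (2 ^ k * r) := by
  rcases lt_or_ge ‖x‖ r with hx | hx
  · exact .inl (mem_ball_zero_iff.mpr hx)
  obtain ⟨k, hk, hk'⟩ := exists_nat_pow_near ((one_le_div hr).mpr hx) one_lt_two
  refine .inr ⟨k, mem_ball_zero_iff.mpr ?_, fun h => (mem_ball_zero_iff.mp h).not_ge ?_⟩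
  · rwa [div_lt_iff₀ hr] at hk'
  · rwa [le_div_iff₀ hr] at hk

theorem eq_of_mem_annulus (hr : 0 < r) {x : Euc n} {j k : ℕ}
    (hj : x ∈ ball (0 : Euc n) (2 ^ (j + 1) * r) \ ball 0 (2 ^ j * r))
    (hk : x ∈ ball (0 : Euc n) (2 ^ (k + 1) * r) \ ball 0 (2 ^ k * r)) : j = k := by
  simp only [mem_sdiff, mem_ball_zero_iff, not_lt] at hj hk
  have hjk : (2 : ℝ) ^ j < 2 ^ (k + 1) := lt_of_mul_lt_mul_right (hj.2.trans_lt hk.1) hr.le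
  have hkj : (2 : ℝ) ^ k < 2 ^ (j + 1) := lt_of_mul_lt_mul_right (hk.2.trans_lt hj.1) hr.le
  rw [pow_lt_pow_iff_right₀ (one_lt_two : (1 : ℝ) < 2)] at hjk hkj
  omega

theorem ball_subset_ball_two_pow_mul (hr : 0 < r) (k : ℕ) :
    ball (0 : Euc n) r ⊆ ball 0 (2 ^ k * r) :=
  ball_subset_ball (le_mul_of_one_le_left hr.le (one_le_pow₀ one_le_two))

theorem dyadicSum_of_mem_ball (hr : 0 < r) {x : Euc n} (hx : x ∈ ball 0 r) :
    dyadicSum n r x = 1 := by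
  have hout (k : ℕ) : x ∉ ball (0 : Euc n) (2 ^ (k + 1) * r) \ ball 0 (2 ^ k * r) :=
    fun hk => hk.2 (ball_subset_ball_two_pow_mul hr k hx)
  simp only [dyadicSum, chiE, indicator_of_mem hx, indicator_of_notMem (hout _), mul_zero,
    tsum_zero, add_zero]

theorem dyadicSum_of_mem_annulus (hr : 0 < r) {x : Euc n} {k : ℕ}
    (hx : x ∈ ball (0 : Euc n) (2 ^ (k + 1) * r) \ ball 0 (2 ^ k * r)) :
    dyadicSum n r x = 2 ^ (-(((k : ℝ) + 1) * n)) := by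
  have hB : x ∉ ball (0 : Euc n) r := fun h => hx.2 (ball_subset_ball_two_pow_mul hr k h)
  rw [dyadicSum, chiE, indicator_of_notMem hB, zero_add, tsum_eq_single k, indicator_of_mem hx,
    mul_one]
  intro j hj
  rw [indicator_of_notMem fun h => hj (eq_of_mem_annulus hr h hx), mul_zero]

theorem ofReal_inv_two_pow_pow (m n : ℕ) :
    ENNReal.ofReal (((2 : ℝ) ^ m)⁻¹ ^ n) = (2 : ℝ≥0∞) ^ (-((m : ℝ) * n)) := by
  rw [inv_pow, ← pow_mul, ENNReal.ofReal_inv_of_pos (by positivity),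
    ENNReal.ofReal_pow (by norm_num), ENNReal.ofReal_ofNat, ENNReal.rpow_neg,
    ← ENNReal.rpow_natCast 2 (m * n)]
  push_cast
  ring_nf

theorem dyadicSum_le_hlMax (hr : 0 < r) (x : Euc n) :
    dyadicSum n r x ≤ hlMax n (chiE n 0 r) x := by
  rcases mem_ball_or_exists_mem_annulus hr x with hx | ⟨k, hx⟩
  · rw [dyadicSum_of_mem_ball hr hx]
    exact one_le_hlMax_chiE hx
  · have hρ : r ≤ 2 ^ (k + 1) * r := le_mul_of_one_le_left hr.le (one_le_pow₀ one_le_two)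
    rw [dyadicSum_of_mem_annulus hr hx, show (k : ℝ) + 1 = ((k + 1 : ℕ) : ℝ) by push_cast; ring,
      ← ofReal_inv_two_pow_pow]
    convert ofReal_le_hlMax_chiE hr hρ (mem_ball_zero_iff.mp hx.1) using 3
    field_simp

theorem hlMax_le_eight_pow_mul_dyadicSum (hr : 0 < r) (x : Euc n) :
    hlMax n (chiE n 0 r) x ≤ 8 ^ n * dyadicSum n r x := by
  rcases mem_ball_or_exists_mem_annulus hr x with hx | ⟨k, hx⟩
  · rw [dyadicSum_of_mem_ball hr hx, mul_one]
    exact (hlMax_chiE_le_one 0 r x).trans (one_le_pow₀ (by norm_num))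
  · have hk : 2 ^ k * r ≤ ‖x‖ := by simpa using hx.2
    have hx0 : 0 < ‖x‖ := lt_of_lt_of_le (by positivity) hk
    rw [dyadicSum_of_mem_annulus hr hx, show (k : ℝ) + 1 = ((k + 1 : ℕ) : ℝ) by push_cast; ring,
      ← ofReal_inv_two_pow_pow, ← ENNReal.ofReal_ofNat 8, ← ENNReal.ofReal_pow (by norm_num),
      ← ENNReal.ofReal_mul (by positivity), ← mul_pow]
    refine (hlMax_chiE_le_ofReal r (norm_pos_iff.mp hx0)).trans
      (ENNReal.ofReal_le_ofReal (pow_le_pow_left₀ (by positivity) ?_ n))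
    rw [div_le_iff₀ hx0, pow_succ]
    field_simp
    linarith

theorem dyadicSum_rpow_le (hr : 0 < r) (θ : ℝ) (x : Euc n) :
    dyadicSum n r x ^ θ ≤ ∑' k : ℕ, ((2 : ℝ≥0∞) ^ (-(n * θ))) ^ k * chiE n 0 (2 ^ k * r) x := by
  rcases mem_ball_or_exists_mem_annulus hr x with hx | ⟨k, hx⟩
  · refine le_of_eq_of_le ?_ (ENNReal.le_tsum 0)
    simp [dyadicSum_of_mem_ball hr hx, chiE, hx]
  · refine le_of_eq_of_le ?_ (ENNReal.le_tsum (k + 1))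
    rw [dyadicSum_of_mem_annulus hr hx, chiE, indicator_of_mem hx.1, mul_one, ← ENNReal.rpow_mul,
      ← ENNReal.rpow_natCast, ← ENNReal.rpow_mul]
    push_cast
    ring_nf

end Dyadic

section KotheDual

variable {n : ℕ} (X : BFL n)

theorem kdual_mono {g h : Euc n → ℝ≥0∞} (hgh : g ≤ h) : kdual X g ≤ kdual X h :=
  iSup₂_mono fun _ _ => lintegral_mono fun x => mul_le_mul_right (hgh x) _

theorem kdual_const_mul {c : ℝ≥0∞} (hc : c ≠ ⊤) (g : Euc n → ℝ≥0∞) :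
    kdual X (fun x => c * g x) = c * kdual X g := by
  simp only [kdual, ENNReal.mul_iSup, ← lintegral_const_mul' c _ hc, mul_left_comm c]

theorem kdual_tsum_le {ι : Type*} [Countable ι] {g : ι → Euc n → ℝ≥0∞}
    (hg : ∀ i, Measurable (g i)) : kdual X (fun x => ∑' i, g i x) ≤ ∑' i, kdual X (g i) := by
  refine iSup₂_le fun f hf => ?_
  have hfm : Measurable fun x => ENNReal.ofReal |f x| := ENNReal.measurable_ofReal.comp hf.1.abs
  simp_rw [← ENNReal.tsum_mul_left]
  rw [lintegral_tsum (f := fun i x => ENNReal.ofReal |f x| * g i x) fun i =>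
    (hfm.mul (hg i)).aemeasurable]
  exact ENNReal.tsum_le_tsum fun i => le_iSup₂_of_le (f := fun f _ => ∫⁻ x, _) f hf le_rfl

end KotheDual

theorem ofReal_two_pow_mul_rpow (k : ℕ) {r : ℝ} (hr : 0 ≤ r) (s : ℝ) :
    ENNReal.ofReal ((2 ^ k * r) ^ s) = ((2 : ℝ≥0∞) ^ s) ^ k * ENNReal.ofReal (r ^ s) := by
  rw [Real.mul_rpow (by positivity) hr, ENNReal.ofReal_mul (by positivity),
    ← ENNReal.ofReal_rpow_of_pos (by positivity), ENNReal.ofReal_pow zero_le_two,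
    ENNReal.ofReal_ofNat, ← ENNReal.rpow_natCast, ← ENNReal.rpow_natCast, ← ENNReal.rpow_mul,
    ← ENNReal.rpow_mul, mul_comm s]

theorem kdual_hlMax_chiE_rpow_le {n : ℕ} (X : BFL n) {r θ s : ℝ} {C₀ : ℝ≥0∞} (hr : 0 < r)
    (hθ : 0 ≤ θ)
    (hX : ∀ k : ℕ, kdual X (chiE n 0 (2 ^ k * r)) ≤ C₀ * ENNReal.ofReal ((2 ^ k * r) ^ s)) :
    kdual X (fun y => hlMax n (chiE n 0 r) y ^ θ) ≤
      (8 ^ n) ^ θ * C₀ * (1 - 2 ^ (s - n * θ))⁻¹ * ENNReal.ofReal (r ^ s) := by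
  set a : ℝ≥0∞ := 2 ^ (-(n * θ))
  have ha : a ≠ ⊤ := ENNReal.rpow_ne_top_of_ne_zero two_ne_zero ofNat_ne_top
  have h8 : ((8 : ℝ≥0∞) ^ n) ^ θ ≠ ⊤ := ENNReal.rpow_ne_top_of_nonneg hθ (by finiteness)
  have hq : (2 : ℝ≥0∞) ^ (s - n * θ) = a * 2 ^ s := by
    rw [← ENNReal.rpow_add _ _ two_ne_zero ofNat_ne_top]
    ring_nf
  have hpt : (fun y => hlMax n (chiE n 0 r) y ^ θ) ≤
      fun y => (8 ^ n) ^ θ * ∑' k : ℕ, a ^ k * chiE n 0 (2 ^ k * r) y := fun y =>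
    calc hlMax n (chiE n 0 r) y ^ θ ≤ (8 ^ n * dyadicSum n r y) ^ θ :=
          ENNReal.rpow_le_rpow (hlMax_le_eight_pow_mul_dyadicSum hr y) hθ
      _ = (8 ^ n) ^ θ * dyadicSum n r y ^ θ := ENNReal.mul_rpow_of_nonneg _ _ hθ
      _ ≤ _ := mul_le_mul_right (dyadicSum_rpow_le hr θ y) _
  calc kdual X (fun y => hlMax n (chiE n 0 r) y ^ θ)
      ≤ (8 ^ n) ^ θ * kdual X (fun y => ∑' k : ℕ, a ^ k * chiE n 0 (2 ^ k * r) y) :=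
        (kdual_mono X hpt).trans_eq (kdual_const_mul X h8 _)
    _ ≤ (8 ^ n) ^ θ * ∑' k : ℕ, a ^ k * kdual X (chiE n 0 (2 ^ k * r)) := by
        refine mul_le_mul_right ?_ _
        refine (kdual_tsum_le X fun k => (measurable_chiE 0 _).const_mul _).trans_eq ?_
        simp only [kdual_const_mul X (ENNReal.pow_ne_top ha)]
    _ ≤ (8 ^ n) ^ θ * ∑' k : ℕ, a ^ k * (C₀ * ENNReal.ofReal ((2 ^ k * r) ^ s)) :=
        mul_le_mul_right (ENNReal.tsum_le_tsum fun k => mul_le_mul_right (hX k) _) _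
    _ = (8 ^ n) ^ θ * C₀ * (∑' k : ℕ, ((2 : ℝ≥0∞) ^ (s - n * θ)) ^ k) * ENNReal.ofReal (r ^ s) := by
        rw [mul_assoc, mul_assoc, ← ENNReal.tsum_mul_right, ← ENNReal.tsum_mul_left (a := C₀)]
        congr 1
        refine tsum_congr fun k => ?_
        rw [ofReal_two_pow_mul_rpow k hr.le, hq, mul_pow]
        ring
    _ = _ := by rw [ENNReal.tsum_geometric]

theorem stmt18_general (n : ℕ) (hn : 0 < n) (α : ℝ) (hαn : α < n) :
    (∃ C : ℝ≥0∞, 0 < C ∧ C < ⊤ ∧ ∀ r : ℝ, 0 < r → ∀ x : Euc n,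
      dyadicSum n r x ≤ C * hlMax n (chiE n 0 r) x ∧
      hlMax n (chiE n 0 r) x ≤ C * dyadicSum n r x) ∧
    ∀ r : ℝ, 0 < r → ∀ (X : BFL n) (s : ℝ), s < (n : ℝ) - α →
      (∃ C₀ : ℝ≥0∞, C₀ < ⊤ ∧ ∀ k : ℕ,
        kdual X (chiE n 0 ((2 : ℝ) ^ k * r)) ≤ C₀ * ENNReal.ofReal (((2 : ℝ) ^ k * r) ^ s)) →
      ∃ C : ℝ≥0∞, C < ⊤ ∧
        kdual X (fun y => hlMax n (chiE n 0 r) y ^ (1 - α / (n : ℝ))) ≤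
          C * ENNReal.ofReal (r ^ s) := by
  have h8 : (1 : ℝ≥0∞) ≤ 8 ^ n := one_le_pow₀ (by norm_num)
  refine ⟨⟨8 ^ n, zero_lt_one.trans_le h8, by finiteness, fun r hr x =>
    ⟨(dyadicSum_le_hlMax hr x).trans (le_mul_of_one_le_left' h8),
      hlMax_le_eight_pow_mul_dyadicSum hr x⟩⟩, ?_⟩
  rintro r hr X s hs ⟨C₀, hC₀, hX⟩
  have hn' : (0 : ℝ) < n := Nat.cast_pos.mpr hn
  have hθ : 0 ≤ 1 - α / n := sub_nonneg.mpr ((div_le_one hn').mpr hαn.le)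
  have hq : (2 : ℝ≥0∞) ^ (s - n * (1 - α / n)) < 1 := by
    refine ENNReal.rpow_lt_one_of_one_lt_of_neg one_lt_two ?_
    rw [mul_sub, mul_div_cancel₀ _ hn'.ne', mul_one]
    linarith
  refine ⟨_, ?_, kdual_hlMax_chiE_rpow_le X hr hθ hX⟩
  have h8θ : ((8 : ℝ≥0∞) ^ n) ^ (1 - α / n) < ⊤ := ENNReal.rpow_lt_top_of_nonneg hθ (by finiteness)
  exact ENNReal.mul_lt_top (ENNReal.mul_lt_top h8θ hC₀)
    (ENNReal.inv_lt_top.mpr (tsub_pos_of_lt hq))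

theorem stmt18 (n : ℕ) (hn : 0 < n) (α : ℝ) (hα : 0 ≤ α) (hαn : α < n) :
    (∃ C : ℝ≥0∞, 0 < C ∧ C < ⊤ ∧ ∀ r : ℝ, 0 < r → ∀ x : Euc n,
      dyadicSum n r x ≤ C * hlMax n (chiE n 0 r) x ∧
      hlMax n (chiE n 0 r) x ≤ C * dyadicSum n r x) ∧
    ∀ r : ℝ, 0 < r → ∀ (X : BFL n) (s : ℝ), s < (n : ℝ) - α →
      (∃ C₀ : ℝ≥0∞, C₀ < ⊤ ∧ ∀ k : ℕ,
        kdual X (chiE n 0 ((2 : ℝ) ^ k * r)) ≤ C₀ * ENNReal.ofReal (((2 : ℝ) ^ k * r) ^ s)) →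
      ∃ C : ℝ≥0∞, C < ⊤ ∧
        kdual X (fun y => hlMax n (chiE n 0 r) y ^ (1 - α / (n : ℝ))) ≤
          C * ENNReal.ofReal (r ^ s) :=
  stmt18_general n hn α hαn
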